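/- Let f₁,…,f_m, g : ℝⁿ → ℝ be Borel measurable, S ⊆ ℝⁿ, and φ ∈ ℝᵐ. Then the infimum over μ ∈ M(S,φ) of E_μ[g(X)] equals the infimum of the last coordinate z over γ(S,φ), and also equals the infimum of E_μ[g(X)] over μ ∈ M_{m+2}(S,φ); likewise, the supremum over μ ∈ M(S,φ) of E_μ[g(X)] equals the supremum of z over γ(S,φ) and equals the supremum of E_μ[g(X)] over μ ∈ M_{m+2}(S,φ). (All equalities hold in the extended reals, with inf over the empty set equal to +∞ and sup equal to −∞.) -/

import Mathlib

/-!
By Carathéodory in `ℝ^{m+1}`, every point `(φ, z)` of `γ(S,φ)` is a convex combination of at most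
`m + 2` points `Γ(xᵢ)` with `xᵢ ∈ S`, so `∑ wᵢ δ_{xᵢ} ∈ M_{m+2}(S,φ)` has `E[g] = z`.
Conversely, for `μ ∈ M(S,φ)` the barycenter `(φ, E_μ[g])` of `Γ` under `μ` lies in the convex hull
of `Γ(S)` itself, not only in its closure: otherwise a functional separating it properly from the
hull would be maximal `μ`-a.e. along `Γ`, confining `Γ` to a face of `Γ(S)` of smaller dimension,
and induction on that dimension applies. So the three sets of attainable values of `E[g]`
coincide, and with them their infima and suprema.
-/

open MeasureTheory Set Filter Topology
open scoped BigOperators ENNReal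

noncomputable section

def msupport {E : Type*} [TopologicalSpace E] [MeasurableSpace E]
    (μ : Measure E) : Set E :=
  {x | ∀ U : Set E, IsOpen U → x ∈ U → μ U ≠ 0}

/-- `M(S,φ)` -/
def MC (n m : ℕ) (f : (Fin n → ℝ) → Fin m → ℝ) (g : (Fin n → ℝ) → ℝ)
    (S : Set (Fin n → ℝ)) (φ : Fin m → ℝ) : Set (Measure (Fin n → ℝ)) :=
  {μ | IsProbabilityMeasure μ ∧ msupport μ ⊆ S ∧
    (∀ i, Integrable (fun x => f x i) μ) ∧ (∀ i, ∫ x, f x i ∂μ = φ i) ∧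
    Integrable g μ}

/-- `M_k(S,φ)` -/
def MCk (n m : ℕ) (f : (Fin n → ℝ) → Fin m → ℝ) (g : (Fin n → ℝ) → ℝ)
    (S : Set (Fin n → ℝ)) (φ : Fin m → ℝ) (k : ℕ) : Set (Measure (Fin n → ℝ)) :=
  {μ | μ ∈ MC n m f g S φ ∧ (msupport μ).encard ≤ (k : ℕ∞)}

/-- `γ(S,φ)`, with `Γ x = (f x, g x) ∈ ℝ^m × ℝ`. -/
def gam (n m : ℕ) (f : (Fin n → ℝ) → Fin m → ℝ) (g : (Fin n → ℝ) → ℝ)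
    (S : Set (Fin n → ℝ)) (φ : Fin m → ℝ) : Set ((Fin m → ℝ) × ℝ) :=
  convexHull ℝ ((fun x => (f x, g x)) '' S) ∩ {p | p.1 = φ}

open Module

section Separation

variable {E : Type*} [NormedAddCommGroup E] [NormedSpace ℝ E] [FiniteDimensional ℝ E]

theorem Convex.exists_le_lt_of_affineSpan_eq_top {C : Set E} (hC : Convex ℝ C)
    (hspan : affineSpan ℝ C = ⊤) {b : E} (hb : b ∉ C) :
    ∃ f : StrongDual ℝ E, (∀ c ∈ C, f c ≤ f b) ∧ ∃ c ∈ C, f c < f b := by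
  obtain ⟨c₀, hc₀⟩ := hC.interior_nonempty_iff_affineSpan_eq_top.2 hspan
  obtain ⟨f, hf⟩ := geometric_hahn_banach_open_point hC.interior isOpen_interior
    fun h => hb (interior_subset h)
  refine ⟨f, fun c hc => ?_, c₀, interior_subset hc₀, hf c₀ hc₀⟩
  have hcl : closure (interior C) ⊆ {y | f y ≤ f b} :=
    closure_minimal (fun a ha => (hf a ha).le) (isClosed_le f.continuous continuous_const)
  rw [hC.closure_interior_eq_closure_of_nonempty_interior ⟨c₀, hc₀⟩] at hcl
  exact hcl (subset_closure hc)

theorem Convex.exists_le_lt_of_mem_affineSpan {C : Set E} (hC : Convex ℝ C) {b : E}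
    (hbA : b ∈ affineSpan ℝ C) (hb : b ∉ C) :
    ∃ g : StrongDual ℝ E, (∀ c ∈ C, g c ≤ g b) ∧ ∃ c ∈ C, g c < g b := by
  set V := (affineSpan ℝ C).direction
  let L : V →ᵃ[ℝ] E := (AffineEquiv.constVAdd ℝ E b).toAffineMap.comp V.subtype.toAffineMap
  have hL : ∀ v : V, L v = b + v := fun _ => rfl
  have hLinj : Function.Injective L := fun v w hvw =>
    Subtype.ext <| add_left_cancel <| (hL v).symm.trans (hvw.trans (hL w))
  have hCL : C ⊆ range L := fun c hc =>
    ⟨⟨c - b, AffineSubspace.vsub_mem_direction (subset_affineSpan ℝ C hc) hbA⟩, by simp [hL]⟩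
  have hspan : affineSpan ℝ (L ⁻¹' C) = ⊤ := by
    refine eq_top_iff.2 fun v _ => ?_
    have hv : L v ∈ (affineSpan ℝ (L ⁻¹' C)).map L := by
      rw [AffineSubspace.map_span, image_preimage_eq_of_subset hCL, hL, add_comm]
      exact AffineSubspace.vadd_mem_of_mem_direction v.2 hbA
    obtain ⟨w, hw, hwv⟩ := AffineSubspace.mem_map.1 hv
    exact hLinj hwv ▸ hw
  obtain ⟨f, hle, c, hc, hlt⟩ := (hC.affine_preimage L).exists_le_lt_of_affineSpan_eq_top hspan
    (b := 0) (by simpa [hL] using hb)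
  obtain ⟨g, hg, -⟩ := exists_extension_norm_eq V f
  have hgL : ∀ v : V, g (L v) = g b + f v := fun v => by rw [hL, map_add, hg]
  refine ⟨g, fun c' hc' => ?_, L c, hc, ?_⟩
  · obtain ⟨v, rfl⟩ := hCL hc'
    linarith [hgL v, hle v hc', f.map_zero]
  · linarith [hgL c, f.map_zero]

theorem finrank_vectorSpan_inter_preimage_lt {T : Set E} (g : E →ₗ[ℝ] ℝ) {c : ℝ} {t t' : E}
    (ht : t ∈ T) (ht' : t' ∈ T) (hgt : g t ≠ c) (hgt' : g t' = c) :
    finrank ℝ (vectorSpan ℝ (T ∩ g ⁻¹' {c})) < finrank ℝ (vectorSpan ℝ T) := by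
  refine Submodule.finrank_lt_finrank_of_lt
    (lt_of_le_of_ne (vectorSpan_mono ℝ inter_subset_left) fun heq => hgt ?_)
  have hker : vectorSpan ℝ (T ∩ g ⁻¹' {c}) ≤ LinearMap.ker g := by
    rw [vectorSpan_def, Submodule.span_le]
    rintro _ ⟨p, hp, q, hq, rfl⟩
    simp_all [vsub_eq_sub]
  have := hker (heq ▸ vsub_mem_vectorSpan ℝ ht ht')
  simpa [vsub_eq_sub, sub_eq_zero, hgt'] using this

end Separation

theorem integral_mem_convexHull {α E : Type*} [MeasurableSpace α] [NormedAddCommGroup E]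
    [NormedSpace ℝ E] [FiniteDimensional ℝ E] {μ : Measure α} [IsProbabilityMeasure μ]
    {h : α → E} (hi : Integrable h μ) {T : Set E} (hT : ∀ᵐ x ∂μ, h x ∈ T) :
    ∫ x, h x ∂μ ∈ convexHull ℝ T := by
  induction hd : finrank ℝ (vectorSpan ℝ T) using Nat.strong_induction_on generalizing T with
  | _ d IH =>
  set b := ∫ x, h x ∂μ
  by_contra hb
  have hbcl : b ∈ closure (convexHull ℝ T) :=
    (convex_convexHull ℝ T).closure.integral_mem isClosed_closure
      (hT.mono fun x hx => subset_closure (subset_convexHull ℝ T hx)) hi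
  have hbA : b ∈ affineSpan ℝ (convexHull ℝ T) :=
    (AffineSubspace.closed_of_finiteDimensional _).closure_subset_iff.2
      (subset_affineSpan ℝ _) hbcl
  obtain ⟨g, hle, c, hc, hlt⟩ := (convex_convexHull ℝ T).exists_le_lt_of_mem_affineSpan hbA hb
  have hgh : ∀ᵐ x ∂μ, g (h x) = g b := by
    have hle' : (fun x => g (h x)) ≤ᵐ[μ] fun _ => g b :=
      hT.mono fun x hx => hle _ (subset_convexHull ℝ T hx)
    refine (integral_eq_iff_of_ae_le (g.integrable_comp hi) (integrable_const _) hle').1 ?_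
    simp [g.integral_comp_comm hi, b]
  have hT' : ∀ᵐ x ∂μ, h x ∈ T ∩ g ⁻¹' {g b} := hT.and hgh
  obtain ⟨t', ht'⟩ := hT'.exists
  obtain ⟨t, ht, hgt⟩ : ∃ t ∈ T, g t < g b := by
    by_contra! H
    have : convexHull ℝ T ⊆ {y | g b ≤ g y} :=
      convexHull_min H (convex_halfSpace_ge g.isLinear _)
    exact (this hc).not_gt hlt
  exact hb (convexHull_mono inter_subset_left (IH _ (hd ▸ finrank_vectorSpan_inter_preimage_lt
    (g : E →ₗ[ℝ] ℝ) ht ht'.1 hgt.ne ht'.2) hT' rfl))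

section Support

variable {X : Type*} [TopologicalSpace X] [MeasurableSpace X]

theorem msupport_eq_support (μ : Measure X) : msupport μ = μ.support := by
  ext x
  simp only [msupport, Measure.support_eq_forall_isOpen, mem_ofPred_eq, pos_iff_ne_zero]
  exact forall_congr' fun U => forall_comm

theorem ae_mem_of_msupport_subset [HereditarilyLindelofSpace X] {μ : Measure X} {S : Set X}
    (hS : msupport μ ⊆ S) : ∀ᵐ x ∂μ, x ∈ S :=
  mem_of_superset (msupport_eq_support μ ▸ Measure.support_mem_ae) hS

end Support

def weightedDirac {X ι : Type*} [MeasurableSpace X] [Fintype ι] (w : ι → ℝ) (x : ι → X) :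
    Measure X :=
  ∑ i, ENNReal.ofReal (w i) • Measure.dirac (x i)

section WeightedDirac

variable {X ι : Type*} [MeasurableSpace X] [Fintype ι] {w : ι → ℝ} {x : ι → X}

theorem isProbabilityMeasure_weightedDirac (hw₀ : ∀ i, 0 ≤ w i) (hw₁ : ∑ i, w i = 1) :
    IsProbabilityMeasure (weightedDirac w x) := by
  constructor
  simp [weightedDirac, Measure.finsetSum_apply, ← ENNReal.ofReal_sum_of_nonneg fun i _ => hw₀ i,
    hw₁]

theorem integrable_weightedDirac [MeasurableSingletonClass X] {E : Type*} [NormedAddCommGroup E] (h : X → E) :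
    Integrable h (weightedDirac w x) :=
  integrable_finsetSum_measure.2 fun _ _ =>
    (integrable_dirac enorm_lt_top).smul_measure ENNReal.ofReal_ne_top

theorem integral_weightedDirac [MeasurableSingletonClass X] {E : Type*} [NormedAddCommGroup E] [NormedSpace ℝ E]
    [CompleteSpace E] (hw₀ : ∀ i, 0 ≤ w i) (h : X → E) :
    ∫ y, h y ∂weightedDirac w x = ∑ i, w i • h (x i) := by
  rw [weightedDirac, integral_finsetSum_measure fun i _ =>
    (integrable_dirac enorm_lt_top).smul_measure ENNReal.ofReal_ne_top]
  simp [integral_smul_measure, ENNReal.toReal_ofReal (hw₀ _)]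

theorem msupport_weightedDirac_subset [MeasurableSingletonClass X] [TopologicalSpace X] [T1Space X] :
    msupport (weightedDirac w x) ⊆ range x := fun y hy => by
  by_contra hyx
  refine hy _ (finite_range x).isClosed.isOpen_compl hyx ?_
  simp [weightedDirac, Measure.finsetSum_apply, Measure.dirac_apply]

end WeightedDirac

theorem integral_prodMk_pi {X ι : Type*} [MeasurableSpace X] [Fintype ι] {μ : Measure X}
    {f : X → ι → ℝ} {g : X → ℝ} (hf : ∀ i, Integrable (fun x => f x i) μ) (hg : Integrable g μ) :
    ∫ x, (f x, g x) ∂μ = (fun i => ∫ x, f x i ∂μ, ∫ x, g x ∂μ) := by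
  rw [integral_pair (Integrable.of_eval hf) hg]
  exact Prod.ext (funext (eval_integral hf)) rfl

section Moments

variable {n m : ℕ} {f : (Fin n → ℝ) → Fin m → ℝ} {g : (Fin n → ℝ) → ℝ}
  {S : Set (Fin n → ℝ)} {φ : Fin m → ℝ}

theorem mem_gam_of_mem_MC {μ : Measure (Fin n → ℝ)} (hμ : μ ∈ MC n m f g S φ) :
    (φ, ∫ x, g x ∂μ) ∈ gam n m f g S φ := by
  obtain ⟨hprob, hsupp, hfi, hfφ, hgi⟩ := hμ
  refine ⟨?_, rfl⟩
  have hΓ : ∫ x, (f x, g x) ∂μ = (φ, ∫ x, g x ∂μ) := by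
    rw [integral_prodMk_pi hfi hgi, funext hfφ]
  rw [← hΓ]
  exact integral_mem_convexHull ((Integrable.of_eval hfi).prodMk hgi)
    ((ae_mem_of_msupport_subset hsupp).mono fun x hx => mem_image_of_mem _ hx)

theorem exists_mem_MCk_integral_eq {p : (Fin m → ℝ) × ℝ} (hp : p ∈ gam n m f g S φ) :
    ∃ μ ∈ MCk n m f g S φ (m + 2), ∫ x, g x ∂μ = p.2 := by
  obtain ⟨hpΓ, hpφ⟩ := hp
  obtain ⟨ι, _, z, w, hzΓ, hz, hw₀, hw₁, hwz⟩ := eq_pos_convex_span_of_mem_convexHull hpΓ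
  choose x hxS hxz using fun i => hzΓ (mem_range_self i)
  have hw₀' : ∀ i, 0 ≤ w i := fun i => (hw₀ i).le
  have := isProbabilityMeasure_weightedDirac (x := x) hw₀' hw₁
  have hΓ : ∫ y, (f y, g y) ∂weightedDirac w x = p := by
    simpa [integral_weightedDirac hw₀', hxz] using hwz
  rw [integral_prodMk_pi (fun _ => integrable_weightedDirac _) (integrable_weightedDirac _)] at hΓ
  have hcard : Fintype.card ι ≤ m + 2 := by
    have := (Submodule.finrank_le (vectorSpan ℝ (range z))).trans_eq
      (show finrank ℝ ((Fin m → ℝ) × ℝ) = m + 1 by simp)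
    linarith [hz.card_le_finrank_succ]
  refine ⟨weightedDirac w x, ⟨⟨inferInstance, msupport_weightedDirac_subset.trans
    (range_subset_iff.2 hxS), fun _ => integrable_weightedDirac _, fun i => ?_,
    integrable_weightedDirac _⟩, ?_⟩, by rw [← hΓ]⟩
  · rw [← hpφ, ← hΓ]
  · calc (msupport (weightedDirac w x)).encard ≤ (range x).encard :=
          encard_mono msupport_weightedDirac_subset
      _ ≤ (univ : Set ι).encard := image_univ (f := x) ▸ encard_image_le x univ
      _ ≤ (m + 2 : ℕ) := by
        rw [encard_univ, ENat.card_eq_coe_fintype_card]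
        exact_mod_cast hcard

end Moments

theorem biInf_comp_eq_of_image_eq {α β γ L : Type*} [CompleteLattice L] {F : α → γ} {G : β → γ}
    {s : Set α} {t : Set β} (k : γ → L) (h : F '' s = G '' t) :
    ⨅ a ∈ s, k (F a) = ⨅ b ∈ t, k (G b) := by
  rw [← sInf_image, ← sInf_image, ← image_image, h, image_image]

theorem biSup_comp_eq_of_image_eq {α β γ L : Type*} [CompleteLattice L] {F : α → γ} {G : β → γ}
    {s : Set α} {t : Set β} (k : γ → L) (h : F '' s = G '' t) :
    ⨆ a ∈ s, k (F a) = ⨆ b ∈ t, k (G b) := by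
  rw [← sSup_image, ← sSup_image, ← image_image, h, image_image]

theorem hull_inequality_general {n m : ℕ}
    (f : (Fin n → ℝ) → Fin m → ℝ) (g : (Fin n → ℝ) → ℝ)
    (S : Set (Fin n → ℝ)) (φ : Fin m → ℝ) :
    (⨅ μ ∈ MC n m f g S φ, ((∫ x, g x ∂μ : ℝ) : EReal)) =
        (⨅ p ∈ gam n m f g S φ, ((p.2 : ℝ) : EReal)) ∧
    (⨅ μ ∈ MC n m f g S φ, ((∫ x, g x ∂μ : ℝ) : EReal)) =
        (⨅ μ ∈ MCk n m f g S φ (m + 2), ((∫ x, g x ∂μ : ℝ) : EReal)) ∧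
    (⨆ μ ∈ MC n m f g S φ, ((∫ x, g x ∂μ : ℝ) : EReal)) =
        (⨆ p ∈ gam n m f g S φ, ((p.2 : ℝ) : EReal)) ∧
    (⨆ μ ∈ MC n m f g S φ, ((∫ x, g x ∂μ : ℝ) : EReal)) =
        (⨆ μ ∈ MCk n m f g S φ (m + 2), ((∫ x, g x ∂μ : ℝ) : EReal)) := by
  set F : Measure (Fin n → ℝ) → ℝ := fun μ => ∫ x, g x ∂μ
  have hMC_gam : F '' MC n m f g S φ ⊆ Prod.snd '' gam n m f g S φ := by
    rintro _ ⟨μ, hμ, rfl⟩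
    exact ⟨_, mem_gam_of_mem_MC hμ, rfl⟩
  have hgam_MCk : Prod.snd '' gam n m f g S φ ⊆ F '' MCk n m f g S φ (m + 2) := by
    rintro _ ⟨p, hp, rfl⟩
    exact exists_mem_MCk_integral_eq hp
  have hMCk_MC : F '' MCk n m f g S φ (m + 2) ⊆ F '' MC n m f g S φ :=
    image_mono fun μ hμ => hμ.1
  have hgam : F '' MC n m f g S φ = Prod.snd '' gam n m f g S φ :=
    hMC_gam.antisymm (hgam_MCk.trans hMCk_MC)
  have hMCk : F '' MC n m f g S φ = F '' MCk n m f g S φ (m + 2) :=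
    (hMC_gam.trans hgam_MCk).antisymm hMCk_MC
  exact ⟨biInf_comp_eq_of_image_eq _ hgam, biInf_comp_eq_of_image_eq _ hMCk,
    biSup_comp_eq_of_image_eq _ hgam, biSup_comp_eq_of_image_eq _ hMCk⟩

/-- Hull inequality: the extrema of `E[g]` over `M(S,φ)` equal
the extrema of the last coordinate over `γ(S,φ)`, and the extrema over
`M_{m+2}(S,φ)`. -/
theorem hull_inequality {n m : ℕ}
    (f : (Fin n → ℝ) → Fin m → ℝ) (g : (Fin n → ℝ) → ℝ)
    (hf : ∀ i, Measurable fun x => f x i) (hg : Measurable g)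
    (S : Set (Fin n → ℝ)) (φ : Fin m → ℝ) :
    (⨅ μ ∈ MC n m f g S φ, ((∫ x, g x ∂μ : ℝ) : EReal)) =
        (⨅ p ∈ gam n m f g S φ, ((p.2 : ℝ) : EReal)) ∧
    (⨅ μ ∈ MC n m f g S φ, ((∫ x, g x ∂μ : ℝ) : EReal)) =
        (⨅ μ ∈ MCk n m f g S φ (m + 2), ((∫ x, g x ∂μ : ℝ) : EReal)) ∧
    (⨆ μ ∈ MC n m f g S φ, ((∫ x, g x ∂μ : ℝ) : EReal)) =
        (⨆ p ∈ gam n m f g S φ, ((p.2 : ℝ) : EReal)) ∧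
    (⨆ μ ∈ MC n m f g S φ, ((∫ x, g x ∂μ : ℝ) : EReal)) =
        (⨆ μ ∈ MCk n m f g S φ (m + 2), ((∫ x, g x ∂μ : ℝ) : EReal)) :=
  hull_inequality_general f g S φ
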